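/- Let u_1, …, u_r be an orthonormal family in ℝ^n, let E be an n×n real matrix, and set x := max_{1≤i,j≤r} |u_iᵀ E u_j|. Then for every 1 ≤ p < r, the spectral norm of the matrix ∑_{1 ≤ i ≤ p < j ≤ r} u_j (u_jᵀ E u_i) u_iᵀ is at most √(p r) · x. -/
import Mathlib

open Matrix Finset

/-- Spectral (ℓ²→ℓ²) operator norm of a real matrix. -/
noncomputable def specNorm {m n : ℕ} (M : Matrix (Fin m) (Fin n) ℝ) : ℝ :=
  ‖LinearMap.toContinuousLinearMap (Matrix.toEuclideanLin M)‖

lemma dotProduct_self_nonneg' {n : ℕ} (v : Fin n → ℝ) : 0 ≤ v ⬝ᵥ v :=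
  Finset.sum_nonneg fun i _ => mul_self_nonneg _

lemma sum_dotProduct' {n : ℕ} {ι : Type*} (s : Finset ι) (f : ι → Fin n → ℝ) (w : Fin n → ℝ) :
    (∑ i ∈ s, f i) ⬝ᵥ w = ∑ i ∈ s, f i ⬝ᵥ w := by
  simp only [dotProduct, Finset.sum_apply, Finset.sum_mul]
  rw [Finset.sum_comm]

lemma dotProduct_sum' {n : ℕ} {ι : Type*} (s : Finset ι) (w : Fin n → ℝ) (f : ι → Fin n → ℝ) :
    w ⬝ᵥ (∑ i ∈ s, f i) = ∑ i ∈ s, w ⬝ᵥ f i := by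
  simp only [dotProduct, Finset.sum_apply, Finset.mul_sum]
  rw [Finset.sum_comm]

lemma sum_mulVec' {m n : ℕ} {ι : Type*} (s : Finset ι) (A : ι → Matrix (Fin m) (Fin n) ℝ)
    (w : Fin n → ℝ) : (∑ i ∈ s, A i) *ᵥ w = ∑ i ∈ s, (A i *ᵥ w) :=
  map_sum (Matrix.mulVec.addMonoidHomLeft w) A s

lemma vecMulVec_mulVec' {m n : ℕ} (v : Fin m → ℝ) (a : Fin n → ℝ) (w : Fin n → ℝ) :
    Matrix.vecMulVec v a *ᵥ w = (a ⬝ᵥ w) • v := by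
  ext i
  simp [Matrix.mulVec, Matrix.vecMulVec_apply, dotProduct, Finset.mul_sum, mul_assoc,
    mul_comm, mul_left_comm]

/-- Bessel's inequality for a finite orthonormal family, stated with dot products. -/
lemma bessel' {n : ℕ} (s : Finset ℕ) (u : ℕ → Fin n → ℝ)
    (hon : ∀ i ∈ s, ∀ j ∈ s, u i ⬝ᵥ u j = if i = j then 1 else 0) (w : Fin n → ℝ) :
    ∑ i ∈ s, (u i ⬝ᵥ w) ^ 2 ≤ w ⬝ᵥ w := by
  set v : Fin n → ℝ := ∑ i ∈ s, (u i ⬝ᵥ w) • u i with hv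
  have h1 : v ⬝ᵥ v = ∑ i ∈ s, (u i ⬝ᵥ w) ^ 2 := by
    rw [hv, sum_dotProduct' ]
    refine Finset.sum_congr rfl fun i hi => ?_
    rw [smul_dotProduct, dotProduct_sum' ]
    rw [Finset.sum_eq_single i]
    · rw [dotProduct_smul, hon i hi i hi]
      simp [sq]
    · intro j hj hji
      rw [dotProduct_smul, hon i hi j hj, if_neg (fun h => hji h.symm)]
      simp
    · intro h; exact absurd hi h
  have h2 : v ⬝ᵥ w = ∑ i ∈ s, (u i ⬝ᵥ w) ^ 2 := by
    rw [hv, sum_dotProduct' ]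
    refine Finset.sum_congr rfl fun i hi => ?_
    rw [smul_dotProduct, smul_eq_mul, sq]
  have h3 : 0 ≤ (w - v) ⬝ᵥ (w - v) := dotProduct_self_nonneg' _
  have h4 : (w - v) ⬝ᵥ (w - v) = w ⬝ᵥ w - w ⬝ᵥ v - (v ⬝ᵥ w - v ⬝ᵥ v) := by
    rw [sub_dotProduct, dotProduct_sub, dotProduct_sub]
  have h5 : w ⬝ᵥ v = v ⬝ᵥ w := dotProduct_comm w v
  rw [h4, h5, h1, h2] at h3
  linarith

/-- Spectral norm bound via quadratic form bound on `M *ᵥ w`. -/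
lemma specNorm_le_of_sq {m n : ℕ} (M : Matrix (Fin m) (Fin n) ℝ) (c : ℝ) (hc : 0 ≤ c)
    (h : ∀ w : Fin n → ℝ, (M *ᵥ w) ⬝ᵥ (M *ᵥ w) ≤ c ^ 2 * (w ⬝ᵥ w)) : specNorm M ≤ c := by
  refine ContinuousLinearMap.opNorm_le_bound _ hc fun v => ?_
  have hTv : ‖LinearMap.toContinuousLinearMap (Matrix.toEuclideanLin M) v‖
      = Real.sqrt ((M *ᵥ (WithLp.equiv 2 (Fin n → ℝ) v)) ⬝ᵥ (M *ᵥ (WithLp.equiv 2 (Fin n → ℝ) v))) := by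
    rw [EuclideanSpace.norm_eq]
    congr 1
    refine Finset.sum_congr rfl fun i _ => ?_
    rw [Real.norm_eq_abs, sq_abs, sq]
    rfl
  have hvnorm : ‖v‖ = Real.sqrt ((WithLp.equiv 2 (Fin n → ℝ) v) ⬝ᵥ (WithLp.equiv 2 (Fin n → ℝ) v)) := by
    rw [EuclideanSpace.norm_eq]
    congr 1
    refine Finset.sum_congr rfl fun i _ => ?_
    rw [Real.norm_eq_abs, sq_abs, sq]
    rfl
  rw [hTv, hvnorm]
  set w := WithLp.equiv 2 (Fin n → ℝ) v
  calc Real.sqrt ((M *ᵥ w) ⬝ᵥ (M *ᵥ w)) ≤ Real.sqrt (c ^ 2 * (w ⬝ᵥ w)) :=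
        Real.sqrt_le_sqrt (h w)
    _ = c * Real.sqrt (w ⬝ᵥ w) := by
        rw [Real.sqrt_mul (sq_nonneg c), Real.sqrt_sq hc]

/-- Let `u_1, …, u_r` be an orthonormal family in `ℝ^n`, `E` an `n × n`
real matrix, and `x = max_{1≤i,j≤r} |u_iᵀ E u_j|` (encoded as an upper bound).  Then for every
`1 ≤ p < r`, `‖∑_{1 ≤ i ≤ p < j ≤ r} u_j (u_jᵀ E u_i) u_iᵀ‖ ≤ √(p r) · x`. -/
theorem cross_block_spectral_bound {n r p : ℕ} (hp1 : 1 ≤ p) (hpr : p < r)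
    (u : ℕ → Fin n → ℝ)
    (hon : ∀ i ∈ Finset.Icc 1 r, ∀ j ∈ Finset.Icc 1 r, u i ⬝ᵥ u j = if i = j then 1 else 0)
    (E : Matrix (Fin n) (Fin n) ℝ) (x : ℝ)
    (hx : ∀ i ∈ Finset.Icc 1 r, ∀ j ∈ Finset.Icc 1 r, |u i ⬝ᵥ (E *ᵥ u j)| ≤ x) :
    specNorm (∑ i ∈ Finset.Icc 1 p, ∑ j ∈ Finset.Icc (p + 1) r,
        (u j ⬝ᵥ (E *ᵥ u i)) • Matrix.vecMulVec (u j) (u i)) ≤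
      Real.sqrt ((p : ℝ) * r) * x := by
  have hr1 : 1 ≤ r := le_trans hp1 hpr.le
  have hx0 : 0 ≤ x := le_trans (abs_nonneg _) (hx 1 (by simp [hr1]) 1 (by simp [hr1]))
  have hIsub : Finset.Icc 1 p ⊆ Finset.Icc 1 r := Finset.Icc_subset_Icc_right hpr.le
  have hJsub : Finset.Icc (p + 1) r ⊆ Finset.Icc 1 r :=
    Finset.Icc_subset_Icc_left (Nat.le_add_left 1 p)
  set c : ℕ → ℕ → ℝ := fun j i => u j ⬝ᵥ (E *ᵥ u i) with hc
  apply specNorm_le_of_sq _ _ (by positivity)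
  intro w
  set a : ℕ → ℝ := fun i => u i ⬝ᵥ w with ha
  set s : ℕ → ℝ := fun j => ∑ i ∈ Finset.Icc 1 p, c j i * a i with hs
  have hMw : (∑ i ∈ Finset.Icc 1 p, ∑ j ∈ Finset.Icc (p + 1) r,
      c j i • Matrix.vecMulVec (u j) (u i)) *ᵥ w
      = ∑ j ∈ Finset.Icc (p + 1) r, s j • u j := by
    rw [sum_mulVec']
    have step : ∀ i ∈ Finset.Icc 1 p,
        (∑ j ∈ Finset.Icc (p + 1) r, c j i • Matrix.vecMulVec (u j) (u i)) *ᵥ w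
          = ∑ j ∈ Finset.Icc (p + 1) r, (c j i * a i) • u j := by
      intro i _
      rw [sum_mulVec']
      refine Finset.sum_congr rfl fun j _ => ?_
      rw [Matrix.smul_mulVec, vecMulVec_mulVec', smul_smul]
    rw [Finset.sum_congr rfl step, Finset.sum_comm]
    refine Finset.sum_congr rfl fun j _ => ?_
    rw [hs]
    simp only
    rw [Finset.sum_smul]
  rw [hMw]
  have hnorm : (∑ j ∈ Finset.Icc (p + 1) r, s j • u j) ⬝ᵥ (∑ j ∈ Finset.Icc (p + 1) r, s j • u j)
      = ∑ j ∈ Finset.Icc (p + 1) r, s j ^ 2 := by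
    rw [sum_dotProduct' ]
    refine Finset.sum_congr rfl fun j hj => ?_
    rw [smul_dotProduct, dotProduct_sum' ]
    rw [Finset.sum_eq_single j]
    · rw [dotProduct_smul, hon j (hJsub hj) j (hJsub hj)]
      simp [sq]
    · intro k hk hkj
      rw [dotProduct_smul, hon j (hJsub hj) k (hJsub hk), if_neg (fun h => hkj h.symm)]
      simp
    · intro h; exact absurd hj h
  rw [hnorm]
  -- bound each s j
  have hsj : ∀ j ∈ Finset.Icc (p + 1) r, s j ^ 2 ≤ (p : ℝ) * x ^ 2 * (w ⬝ᵥ w) := by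
    intro j hj
    have h1 : |s j| ≤ x * ∑ i ∈ Finset.Icc 1 p, |a i| := by
      calc |s j| ≤ ∑ i ∈ Finset.Icc 1 p, |c j i * a i| := Finset.abs_sum_le_sum_abs _ _
        _ ≤ ∑ i ∈ Finset.Icc 1 p, x * |a i| := by
            refine Finset.sum_le_sum fun i hi => ?_
            rw [abs_mul]
            exact mul_le_mul_of_nonneg_right (hx j (hJsub hj) i (hIsub hi)) (abs_nonneg _)
        _ = x * ∑ i ∈ Finset.Icc 1 p, |a i| := by rw [Finset.mul_sum]
    have h2 : (∑ i ∈ Finset.Icc 1 p, |a i|) ^ 2 ≤ (p : ℝ) * ∑ i ∈ Finset.Icc 1 p, a i ^ 2 := by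
      have := sq_sum_le_card_mul_sum_sq (s := Finset.Icc 1 p) (f := fun i => |a i|)
      simpa [Nat.card_Icc, sq_abs] using this
    have h3 : ∑ i ∈ Finset.Icc 1 p, a i ^ 2 ≤ w ⬝ᵥ w :=
      bessel' (Finset.Icc 1 p) u (fun i hi j hj => hon i (hIsub hi) j (hIsub hj)) w
    have h4 : s j ^ 2 = |s j| ^ 2 := (sq_abs _).symm
    have h5 : |s j| ^ 2 ≤ (x * ∑ i ∈ Finset.Icc 1 p, |a i|) ^ 2 := by
      apply sq_le_sq' _ h1
      have : 0 ≤ x * ∑ i ∈ Finset.Icc 1 p, |a i| := by positivity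
      linarith [abs_nonneg (s j)]
    have h6 : (x * ∑ i ∈ Finset.Icc 1 p, |a i|) ^ 2
        = x ^ 2 * (∑ i ∈ Finset.Icc 1 p, |a i|) ^ 2 := by ring
    calc s j ^ 2 = |s j| ^ 2 := h4
      _ ≤ x ^ 2 * (∑ i ∈ Finset.Icc 1 p, |a i|) ^ 2 := by rw [← h6]; exact h5
      _ ≤ x ^ 2 * ((p : ℝ) * ∑ i ∈ Finset.Icc 1 p, a i ^ 2) :=
          mul_le_mul_of_nonneg_left h2 (sq_nonneg x)
      _ ≤ x ^ 2 * ((p : ℝ) * (w ⬝ᵥ w)) := by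
          apply mul_le_mul_of_nonneg_left _ (sq_nonneg x)
          exact mul_le_mul_of_nonneg_left h3 (Nat.cast_nonneg p)
      _ = (p : ℝ) * x ^ 2 * (w ⬝ᵥ w) := by ring
  calc ∑ j ∈ Finset.Icc (p + 1) r, s j ^ 2
      ≤ ∑ _j ∈ Finset.Icc (p + 1) r, (p : ℝ) * x ^ 2 * (w ⬝ᵥ w) := Finset.sum_le_sum hsj
    _ = ((Finset.Icc (p + 1) r).card : ℝ) * ((p : ℝ) * x ^ 2 * (w ⬝ᵥ w)) := by
        rw [Finset.sum_const, nsmul_eq_mul]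
    _ ≤ (Real.sqrt ((p : ℝ) * r) * x) ^ 2 * (w ⬝ᵥ w) := by
        rw [Nat.card_Icc]
        have hcard : ((r + 1 - (p + 1) : ℕ) : ℝ) ≤ (r : ℝ) := by
          have : r + 1 - (p + 1) ≤ r := by omega
          exact_mod_cast this
        have hsq : (Real.sqrt ((p : ℝ) * r) * x) ^ 2 = (p : ℝ) * r * x ^ 2 := by
          rw [mul_pow, Real.sq_sqrt (by positivity)]
        rw [hsq]
        have hw : 0 ≤ w ⬝ᵥ w := dotProduct_self_nonneg' w
        have : ((r + 1 - (p + 1) : ℕ) : ℝ) * ((p : ℝ) * x ^ 2) ≤ (p : ℝ) * (r : ℝ) * x ^ 2 := by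
          have h := mul_le_mul_of_nonneg_right hcard (by positivity : (0:ℝ) ≤ (p : ℝ) * x ^ 2)
          nlinarith [h]
        nlinarith [this, hw]
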